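/- arXiv:hep-th/9807108 — 5 statements merged into one kernel-verified Lean document; each statement's English description precedes it below -/
import Mathlib

section
/- Let N ≥ 1, let n_{μν} (μ,ν = 0,…,d−1) be an antisymmetric d×d integer matrix, and let Γ_0,…,Γ_{d−1} be invertible N×N complex matrices satisfying Γ_μ Γ_ν = exp(2πi·n_{μν}/N)·Γ_ν Γ_μ for all μ,ν. For an integer vector m = (m_0,…,m_{d−1}) set Γ(m) = Γ_0^{m_0}·Γ_1^{m_1}···Γ_{d−1}^{m_{d−1}}. If there exists an index μ such that Σ_ν n_{μν}·m_ν ≢ 0 (mod N), then Tr Γ(m) = 0. -/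
/-!
Conjugation by `Γ_μ` multiplies each `Γ_ν` by the central scalar `ζ ^ n_{μν}`, where
`ζ = exp(2πi/N)`, hence multiplies `Γ(m)` by `ζ ^ ∑_ν n_{μν} m_ν`. This scalar is not `1`
because `ζ` is a primitive `N`-th root of unity, while the trace is invariant under
conjugation, so `Tr Γ(m) = ζ ^ ∑_ν n_{μν} m_ν · Tr Γ(m)` forces `Tr Γ(m) = 0`.
-/

open Complex

/-- The ordered product `Γ(m) = Γ_0 ^ m_0 · Γ_1 ^ m_1 ⋯ Γ_{d-1} ^ m_{d-1}` of the
twist-eater generators (as units, so that negative integer powers make sense). -/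
noncomputable def gammaProd {N d : ℕ} (Γ : Fin d → (Matrix (Fin N) (Fin N) ℂ)ˣ)
    (m : Fin d → ℤ) : (Matrix (Fin N) (Fin N) ℂ)ˣ :=
  ((List.finRange d).map fun μ => Γ μ ^ m μ).prod

theorem conj_list_prod_map_zpow {G ι : Type*} [Group G] {g c : G} (hc : c ∈ Subgroup.center G)
    {x : ι → G} {k : ι → ℤ} (hx : ∀ i, g * x i * g⁻¹ = c ^ k i * x i) (m : ι → ℤ)
    (l : List ι) :
    g * (l.map fun i => x i ^ m i).prod * g⁻¹ =
      c ^ (l.map fun i => k i * m i).sum * (l.map fun i => x i ^ m i).prod := by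
  have hcomm : ∀ (p : ℤ) y, Commute (c ^ p) y := fun p y =>
    Commute.zpow_left (Subgroup.mem_center_iff.mp hc y).symm p
  induction l with
  | nil => simp
  | cons a t ih =>
    have hxa : g * x a ^ m a * g⁻¹ = c ^ (k a * m a) * x a ^ m a := by
      rw [← conj_zpow, hx, (hcomm _ _).mul_zpow, zpow_mul]
    calc g * (x a ^ m a * (t.map fun i => x i ^ m i).prod) * g⁻¹
        = (g * x a ^ m a * g⁻¹) * (g * (t.map fun i => x i ^ m i).prod * g⁻¹) := by group
      _ = c ^ (k a * m a) * x a ^ m a *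
            (c ^ (t.map fun i => k i * m i).sum * (t.map fun i => x i ^ m i).prod) := by
        rw [hxa, ih]
      _ = c ^ (k a * m a + (t.map fun i => k i * m i).sum) *
            (x a ^ m a * (t.map fun i => x i ^ m i).prod) := by
        rw [zpow_add, mul_assoc, ← mul_assoc (x a ^ m a), ((hcomm _ _).eq).symm]
        simp only [mul_assoc]

section Algebra

variable {K A : Type*} [Semifield K] [Semiring A] [Algebra K A]

theorem Units.map_algebraMap_mem_center (ζ : Kˣ) :
    Units.map (algebraMap K A : K →* A) ζ ∈ Subgroup.center Aˣ :=
  Subgroup.mem_center_iff.mpr fun y => Units.ext (Algebra.commutes (ζ : K) (y : A)).symm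

theorem Units.val_map_algebraMap_zpow (ζ : Kˣ) (k : ℤ) :
    ((Units.map (algebraMap K A : K →* A) ζ ^ k : Aˣ) : A) = algebraMap K A ((ζ : K) ^ k) := by
  rw [← map_zpow, Units.coe_map, MonoidHom.coe_coe, Units.val_zpow_eq_zpow_val]

theorem Units.conj_eq_map_algebraMap_zpow_mul {g x : Aˣ} {ζ : Kˣ} {k : ℤ}
    (h : (g : A) * x = (ζ : K) ^ k • ((x : A) * g)) :
    g * x * g⁻¹ = Units.map (algebraMap K A : K →* A) ζ ^ k * x := by
  ext
  rw [Units.val_mul, Units.val_mul, h, smul_mul_assoc, mul_assoc, Units.mul_inv, mul_one,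
    Algebra.smul_def, Units.val_mul, Units.val_map_algebraMap_zpow]

end Algebra

theorem Matrix.trace_eq_zero_of_units_conj_eq_smul {n R : Type*} [Fintype n] [DecidableEq n]
    [CommRing R] [NoZeroDivisors R] (g : (Matrix n n R)ˣ) {X : Matrix n n R} {c : R}
    (hc : c ≠ 1) (h : (g : Matrix n n R) * X * (g⁻¹ : (Matrix n n R)ˣ) = c • X) :
    X.trace = 0 := by
  have htr : X.trace = c * X.trace := calc
    X.trace = (g * X * (g⁻¹ : (Matrix n n R)ˣ) : Matrix n n R).trace :=
      (Matrix.trace_units_conj g X).symm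
    _ = c * X.trace := by rw [h, Matrix.trace_smul, smul_eq_mul]
  have : (1 - c) * X.trace = 0 := by linear_combination htr
  exact (mul_eq_zero.mp this).resolve_left (sub_ne_zero.mpr hc.symm)

theorem trace_gammaProd_eq_zero_general
    (N : ℕ) (hN : 1 ≤ N) (d : ℕ)
    (n : Fin d → Fin d → ℤ)
    (Γ : Fin d → (Matrix (Fin N) (Fin N) ℂ)ˣ)
    (hcomm : ∀ μ ν, (Γ μ : Matrix (Fin N) (Fin N) ℂ) * (Γ ν : Matrix (Fin N) (Fin N) ℂ) =
      Complex.exp (2 * Real.pi * Complex.I * (n μ ν : ℤ) / N) •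
        ((Γ ν : Matrix (Fin N) (Fin N) ℂ) * (Γ μ : Matrix (Fin N) (Fin N) ℂ)))
    (m : Fin d → ℤ)
    (hm : ∃ μ, ¬ ((N : ℤ) ∣ ∑ ν, n μ ν * m ν)) :
    Matrix.trace (gammaProd Γ m : Matrix (Fin N) (Fin N) ℂ) = 0 := by
  obtain ⟨μ, hμ⟩ := hm
  set ζ : ℂˣ := Units.mk0 _ (Complex.exp_ne_zero (2 * Real.pi * I / N))
  have hprim : IsPrimitiveRoot (ζ : ℂ) N := Complex.isPrimitiveRoot_exp N (by omega)
  have hphase (k : ℤ) : Complex.exp (2 * Real.pi * I * k / N) = (ζ : ℂ) ^ k := by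
    rw [Units.val_mk0, ← Complex.exp_int_mul]
    ring_nf
  have hconj : Γ μ * gammaProd Γ m * (Γ μ)⁻¹ =
      Units.map (algebraMap ℂ (Matrix (Fin N) (Fin N) ℂ) : ℂ →* _) ζ ^
        (∑ ν, n μ ν * m ν) * gammaProd Γ m := by
    rw [Fin.sum_univ_def]
    exact conj_list_prod_map_zpow (Units.map_algebraMap_mem_center ζ)
      (fun ν => Units.conj_eq_map_algebraMap_zpow_mul (by rw [hcomm, hphase])) m _
  refine Matrix.trace_eq_zero_of_units_conj_eq_smul (Γ μ)
    (c := (ζ : ℂ) ^ ∑ ν, n μ ν * m ν) ?_ ?_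
  · rwa [Ne, hprim.zpow_eq_one_iff_dvd]
  · have := congrArg Units.val hconj
    rwa [Units.val_mul, Units.val_mul, Units.val_mul, Units.val_map_algebraMap_zpow,
      ← Algebra.smul_def] at this

/-- If `Γ_μ Γ_ν = exp(2πi n_{μν} / N) Γ_ν Γ_μ` with `n` antisymmetric and there is an
index `μ` such that `∑_ν n_{μν} m_ν ≢ 0 (mod N)`, then `Tr Γ(m) = 0`. -/
theorem trace_gammaProd_eq_zero
    (N : ℕ) (hN : 1 ≤ N) (d : ℕ)
    (n : Fin d → Fin d → ℤ) (hanti : ∀ μ ν, n ν μ = - n μ ν)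
    (Γ : Fin d → (Matrix (Fin N) (Fin N) ℂ)ˣ)
    (hcomm : ∀ μ ν, (Γ μ : Matrix (Fin N) (Fin N) ℂ) * (Γ ν : Matrix (Fin N) (Fin N) ℂ) =
      Complex.exp (2 * Real.pi * Complex.I * (n μ ν : ℤ) / N) •
        ((Γ ν : Matrix (Fin N) (Fin N) ℂ) * (Γ μ : Matrix (Fin N) (Fin N) ℂ)))
    (m : Fin d → ℤ)
    (hm : ∃ μ, ¬ ((N : ℤ) ∣ ∑ ν, n μ ν * m ν)) :
    Matrix.trace (gammaProd Γ m : Matrix (Fin N) (Fin N) ℂ) = 0 :=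
  trace_gammaProd_eq_zero_general N hN d n Γ hcomm m hm
end

section
/- Let N ≥ 1, let ω be a primitive N-th root of unity in ℂ, and let U and V be invertible N×N complex matrices with U·V = ω·V·U. Then every N×N complex matrix W satisfying W·U = U·W and W·V = V·W is a scalar multiple of the identity matrix. (Equivalently, the pair (U,V) acts irreducibly on ℂ^N.) -/
/-!
Let `c` be an eigenvalue of `W`. Its eigenspace is invariant under `U`, so it contains an
eigenvector `x` of `U`, with eigenvalue `μ ≠ 0` since `U` is invertible. The relation
`U V = ω V U` makes `V ^ j x` an eigenvector of `U` for `ω ^ j μ`; for `j < N` these eigenvalues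
are distinct, so the `N` vectors `V ^ j x` are linearly independent and span `ℂ ^ N`. They all
lie in the `c`-eigenspace of `W`, because `W` commutes with `V`; hence `W = c • 1`.
-/

open Module

namespace Module.End

variable {K V : Type*} [Field K] [AddCommGroup V] [Module K V]

theorem exists_hasEigenvector_mem_of_mapsTo [IsAlgClosed K] [FiniteDimensional K V]
    {f : End K V} {p : Submodule K V} (hfp : ∀ x ∈ p, f x ∈ p) (hp : p ≠ ⊥) :
    ∃ μ x, x ∈ p ∧ f.HasEigenvector μ x := by
  have : Nontrivial p := Submodule.nontrivial_iff_ne_bot.mpr hp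
  obtain ⟨μ, hμ⟩ := exists_eigenvalue (f.restrict hfp)
  obtain ⟨y, hy⟩ := hμ.exists_hasEigenvector
  refine ⟨μ, y, y.2, mem_eigenspace_iff.mpr ?_, by simpa using hy.2⟩
  simpa using congrArg Subtype.val hy.apply_eq_smul

section WeylPair

variable {u v : End K V} {ω : K}

theorem HasEigenvector.apply_of_mul_eq_smul_mul (huv : u * v = ω • (v * u))
    (hv : Function.Injective v) {μ : K} {x : V} (hx : u.HasEigenvector μ x) :
    u.HasEigenvector (ω * μ) (v x) := by
  refine ⟨mem_eigenspace_iff.mpr ?_, (map_ne_zero_iff v hv).mpr hx.2⟩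
  rw [← mul_apply, huv, LinearMap.smul_apply, mul_apply, hx.apply_eq_smul, map_smul, smul_smul]

theorem HasEigenvector.pow_apply_of_mul_eq_smul_mul (huv : u * v = ω • (v * u))
    (hv : Function.Injective v) {μ : K} {x : V} (hx : u.HasEigenvector μ x) (j : ℕ) :
    u.HasEigenvector (ω ^ j * μ) ((v ^ j) x) := by
  induction j with
  | zero => simpa using hx
  | succ j ih =>
    rw [pow_succ', mul_assoc, pow_succ', mul_apply]
    exact ih.apply_of_mul_eq_smul_mul huv hv

theorem exists_eq_smul_one_of_commute_of_mul_eq_smul_mul [IsAlgClosed K] [FiniteDimensional K V]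
    {N : ℕ} (hVN : finrank K V ≤ N) (hω : IsPrimitiveRoot ω N)
    (hu : Function.Injective u) (hv : Function.Injective v) (huv : u * v = ω • (v * u))
    {w : End K V} (hwu : Commute w u) (hwv : Commute w v) :
    ∃ c : K, w = c • 1 := by
  rcases subsingleton_or_nontrivial V with _ | _
  · exact ⟨0, Subsingleton.elim _ _⟩
  obtain ⟨c, hc⟩ := w.exists_eigenvalue
  obtain ⟨μ, x, hxc, hx⟩ := exists_hasEigenvector_mem_of_mapsTo
    (fun y hy => mapsTo_genEigenspace_of_comm hwu c 1 hy) hc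
  have hμ : μ ≠ 0 := by
    rintro rfl
    exact hx.2 (hu (by simpa using hx.apply_eq_smul))
  have hindep : LinearIndependent K (fun j : Fin N => (v ^ (j : ℕ)) x) :=
    u.eigenvectors_linearIndependent' (fun j : Fin N => ω ^ (j : ℕ) * μ)
      (fun i j hij => Fin.ext (hω.pow_inj i.2 j.2 (mul_right_cancel₀ hμ hij)))
      _ (fun j => hx.pow_apply_of_mul_eq_smul_mul huv hv j)
  have hspan : Submodule.span K (Set.range fun j : Fin N => (v ^ (j : ℕ)) x) = ⊤ :=
    hindep.span_eq_top_of_card_eq_finrank'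
      (le_antisymm (by simpa using hindep.fintype_card_le_finrank) (by simpa using hVN))
  have htop : w.eigenspace c = ⊤ :=
    top_le_iff.mp (hspan ▸ Submodule.span_le.mpr (Set.range_subset_iff.mpr fun j =>
      mapsTo_genEigenspace_of_comm (hwv.pow_right j) c 1 hxc))
  refine ⟨c, LinearMap.ext fun y => ?_⟩
  simpa using mem_eigenspace_iff.mp (htop ▸ Submodule.mem_top : y ∈ w.eigenspace c)

end WeylPair

end Module.End

theorem commutant_of_clock_shift_pair_is_scalar_general
    (N : ℕ)
    (ω : ℂ) (hω : IsPrimitiveRoot ω N)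
    (U V : Matrix (Fin N) (Fin N) ℂ)
    (hU : IsUnit U) (hV : IsUnit V)
    (hcomm : U * V = ω • (V * U))
    (W : Matrix (Fin N) (Fin N) ℂ)
    (hWU : W * U = U * W) (hWV : W * V = V * W) :
    ∃ c : ℂ, W = c • (1 : Matrix (Fin N) (Fin N) ℂ) := by
  let toEnd := (Matrix.toLinAlgEquiv' : Matrix (Fin N) (Fin N) ℂ ≃ₐ[ℂ] End ℂ (Fin N → ℂ))
  obtain ⟨c, hc⟩ := Module.End.exists_eq_smul_one_of_commute_of_mul_eq_smul_mul
    (Module.finrank_fin_fun ℂ).le hω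
    (Matrix.mulVec_injective_iff_isUnit.mpr hU) (Matrix.mulVec_injective_iff_isUnit.mpr hV)
    (by simpa only [map_mul, map_smul] using congrArg toEnd hcomm)
    (Commute.map hWU toEnd) (Commute.map hWV toEnd)
  exact ⟨c, toEnd.injective (by simpa only [map_smul, map_one] using hc)⟩

/-- If `U V = ω • (V U)` for a primitive `N`-th root of unity `ω` and invertible
matrices `U`, `V`, then any matrix commuting with both `U` and `V` is a scalar
multiple of the identity: the pair `(U, V)` acts irreducibly on `ℂ^N`. -/
theorem commutant_of_clock_shift_pair_is_scalar
    (N : ℕ) (hN : 1 ≤ N)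
    (ω : ℂ) (hω : IsPrimitiveRoot ω N)
    (U V : Matrix (Fin N) (Fin N) ℂ)
    (hU : IsUnit U) (hV : IsUnit V)
    (hcomm : U * V = ω • (V * U))
    (W : Matrix (Fin N) (Fin N) ℂ)
    (hWU : W * U = U * W) (hWV : W * V = V * W) :
    ∃ c : ℂ, W = c • (1 : Matrix (Fin N) (Fin N) ℂ) :=
  commutant_of_clock_shift_pair_is_scalar_general N ω hω U V hU hV hcomm W hWU hWV
end

section
/- Let N ≥ 1 and let U and V be N×N unitary matrices with U·V = exp(2πi/N)·V·U. Then there exist an N×N unitary matrix S and complex numbers c₁, c₂ of modulus 1 such that U = c₁·S·Q_N·S⁻¹ and V = c₂·S·P_N·S⁻¹. In other words, up to a common unitary change of basis and multiplication by phases, the pair (U,V) equals the clock–shift pair (Q_N,P_N); the solution of the twist-eater equations with irreducible twist is unique modulo these equivalences. -/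
/-!
`U` and `V ^ N` commute because `ω ^ N = 1`, so they have a common unit eigenvector `v`, say
`U v = a v`. The relation `U V = ω V U` makes `V ^ k v` an eigenvector of `U` for `a ω ^ k`. After
multiplying `V` by the phase `c̄`, where `c ^ N` is the eigenvalue of `V ^ N` at `v`, we get
`V ^ N v = v`. The vectors `v, V v, …, V ^ (N - 1) v` are then eigenvectors of the unitary `U` for
the distinct eigenvalues `a ω ^ k`, hence an orthonormal basis, in which `U` acts as `a Q_N` and
`V` as `c P_N`.
-/

open Complex

/-- The clock matrix `Q_N`, diagonal with entries `ω ^ j`, `ω = exp (2πi/N)`. -/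
noncomputable def clockMatrix (N : ℕ) : Matrix (Fin N) (Fin N) ℂ :=
  Matrix.diagonal fun j => Complex.exp (2 * Real.pi * Complex.I * (j : ℕ) / N)

/-- The shift matrix `P_N`, with `(P_N) j k = 1` iff `j ≡ k + 1 (mod N)`. -/
def shiftMatrix (N : ℕ) : Matrix (Fin N) (Fin N) ℂ :=
  Matrix.of fun j k => if (j : ℕ) = ((k : ℕ) + 1) % N then 1 else 0

open Matrix
open scoped ComplexOrder

theorem Module.End.exists_common_eigenvector {K M : Type*} [Field K] [IsAlgClosed K]
    [AddCommGroup M] [Module K M] [FiniteDimensional K M] [Nontrivial M] {f g : Module.End K M}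
    (h : Commute f g) : ∃ v ≠ 0, ∃ a b : K, f v = a • v ∧ g v = b • v := by
  obtain ⟨a, ha⟩ := f.exists_eigenvalue
  have : Nontrivial (f.eigenspace a) := Submodule.nontrivial_iff_ne_bot.mpr ha
  obtain ⟨b, hb⟩ :=
    Module.End.exists_eigenvalue (g.restrict (Module.End.mapsTo_genEigenspace_of_comm h a 1))
  obtain ⟨⟨w, hwa⟩, hw⟩ := hb.exists_hasEigenvector
  exact ⟨w, fun h0 => hw.2 (Subtype.ext h0), a, b, Module.End.mem_eigenspace_iff.mp hwa,
    congrArg Subtype.val hw.apply_eq_smul⟩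

theorem mul_pow_eq_smul_pow_mul {R A : Type*} [CommSemiring R] [Semiring A] [Algebra R A]
    {a b : A} {r : R} (h : a * b = r • (b * a)) (k : ℕ) : a * b ^ k = r ^ k • (b ^ k * a) := by
  induction k with
  | zero => simp
  | succ k ih =>
    rw [pow_succ, ← mul_assoc, ih, smul_mul_assoc, mul_assoc, h, mul_smul_comm, smul_smul,
      ← mul_assoc, ← pow_succ, pow_succ' r]

theorem Complex.mem_unitary_iff_norm_eq_one {z : ℂ} : z ∈ unitary ℂ ↔ ‖z‖ = 1 := by
  rw [Unitary.mem_iff_star_mul_self, Complex.star_def, Complex.conj_mul',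
    ← pow_eq_one_iff_of_nonneg (norm_nonneg z) two_ne_zero]
  norm_cast

theorem Complex.exists_pow_eq_of_mem_unitary {μ : ℂ} (hμ : μ ∈ unitary ℂ) {N : ℕ} (hN : N ≠ 0) :
    ∃ c ∈ unitary ℂ, c ^ N = μ := by
  obtain ⟨c, hc⟩ := IsAlgClosed.exists_pow_nat_eq μ (Nat.pos_of_ne_zero hN)
  refine ⟨c, Complex.mem_unitary_iff_norm_eq_one.mpr ?_, hc⟩
  rw [← pow_eq_one_iff_of_nonneg (norm_nonneg c) hN, ← norm_pow, hc,
    Complex.mem_unitary_iff_norm_eq_one.mp hμ]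

namespace Matrix

variable {n : Type*} [Fintype n]

theorem exists_smul_star_dotProduct_self_eq_one {v : n → ℂ} (hv : v ≠ 0) :
    ∃ t : ℂ, star (t • v) ⬝ᵥ (t • v) = 1 := by
  obtain ⟨r, hr, hrv⟩ : ∃ r : ℝ, 0 < r ∧ (r : ℂ) = star v ⬝ᵥ v :=
    RCLike.pos_iff_exists_ofReal.mp (dotProduct_star_self_pos_iff.mpr hv)
  have h : (√r)⁻¹ * ((√r)⁻¹ * r) = 1 := by
    rw [← mul_assoc, ← mul_inv, Real.mul_self_sqrt hr.le, inv_mul_cancel₀ hr.ne']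
  refine ⟨((√r)⁻¹ : ℝ), ?_⟩
  rw [star_smul, smul_dotProduct, dotProduct_smul, ← hrv]
  simp only [Complex.star_def, Complex.conj_ofReal, smul_eq_mul]
  exact_mod_cast h

theorem exists_unit_common_eigenvector [DecidableEq n] [Nonempty n] {A B : Matrix n n ℂ}
    (h : Commute A B) :
    ∃ v, star v ⬝ᵥ v = 1 ∧ ∃ a b : ℂ, A *ᵥ v = a • v ∧ B *ᵥ v = b • v := by
  obtain ⟨v, hv, a, b, hA, hB⟩ :=
    Module.End.exists_common_eigenvector (h.map (toLinAlgEquiv' (R := ℂ)))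
  rw [toLinAlgEquiv'_apply] at hA hB
  obtain ⟨t, ht⟩ := exists_smul_star_dotProduct_self_eq_one hv
  exact ⟨t • v, ht, a, b, by rw [mulVec_smul, hA, smul_comm], by rw [mulVec_smul, hB, smul_comm]⟩

theorem mul_transpose_of_apply {m α : Type*} [NonUnitalNonAssocSemiring α] (A : Matrix m n α)
    (u : n → n → α) (i : m) (k : n) : (A * (of u)ᵀ) i k = (A *ᵥ u k) i :=
  rfl

variable [DecidableEq n]

theorem star_mulVec_dotProduct_mulVec {α : Type*} [CommRing α] [StarRing α] {A : Matrix n n α}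
    (hA : A ∈ unitaryGroup n α) (x y : n → α) : star (A *ᵥ x) ⬝ᵥ (A *ᵥ y) = star x ⬝ᵥ y := by
  rw [star_mulVec, dotProduct_mulVec, vecMul_vecMul, ← star_eq_conjTranspose,
    mem_unitaryGroup_iff'.mp hA, vecMul_one]

theorem transpose_of_mem_unitaryGroup {α : Type*} [CommRing α] [StarRing α] {u : n → n → α}
    (hu : ∀ j k, star (u j) ⬝ᵥ u k = if j = k then 1 else 0) :
    (of u)ᵀ ∈ unitaryGroup n α := by
  rw [mem_unitaryGroup_iff']
  ext j k
  simpa [mul_apply, dotProduct, one_apply] using hu j k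

theorem eq_mul_mul_inv_of_mul_eq_mul {A B S : Matrix n n ℂ} (hS : S ∈ unitaryGroup n ℂ)
    (h : A * S = S * B) : A = S * B * S⁻¹ := by
  rw [← h, mul_nonsing_inv_cancel_right _ _ (UnitaryGroup.det_isUnit ⟨S, hS⟩)]

variable {A : Matrix n n ℂ} (hA : A ∈ unitaryGroup n ℂ)
include hA

theorem mem_unitary_of_mulVec_eq_smul {x : n → ℂ} {a : ℂ} (hx : A *ᵥ x = a • x) (hx0 : x ≠ 0) :
    a ∈ unitary ℂ := by
  rw [Unitary.mem_iff_star_mul_self]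
  have h := star_mulVec_dotProduct_mulVec hA x x
  rw [hx, star_smul, smul_dotProduct, dotProduct_smul, smul_smul, smul_eq_mul] at h
  exact (mul_eq_right₀ (dotProduct_star_self_eq_zero.not.mpr hx0)).mp h

theorem dotProduct_eq_zero_of_mulVec_eq_smul {x y : n → ℂ} {a b : ℂ} (hx : A *ᵥ x = a • x)
    (hy : A *ᵥ y = b • y) (hab : a ≠ b) : star x ⬝ᵥ y = 0 := by
  rcases eq_or_ne x 0 with rfl | hx0
  · simp
  have ha := Unitary.star_mul_self_of_mem (mem_unitary_of_mulVec_eq_smul hA hx hx0)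
  have h := star_mulVec_dotProduct_mulVec hA x y
  rw [hx, hy, star_smul, smul_dotProduct, dotProduct_smul, smul_smul, smul_eq_mul] at h
  by_contra hxy
  have hab' : star a * b = 1 := (mul_eq_right₀ hxy).mp h
  exact hab (by linear_combination b * ha - a * hab')

end Matrix

theorem clockMatrix_eq_diagonal_pow (N : ℕ) :
    clockMatrix N =
      diagonal fun j : Fin N => Complex.exp (2 * Real.pi * Complex.I / N) ^ (j : ℕ) := by
  simp only [clockMatrix, ← Complex.exp_nat_mul]
  congr! 3
  ring

theorem mul_shiftMatrix_apply {m : Type*} {N : ℕ} [NeZero N] (M : Matrix m (Fin N) ℂ) (i : m)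
    (k : Fin N) :
    (M * shiftMatrix N) i k = M i ⟨((k : ℕ) + 1) % N, Nat.mod_lt _ (NeZero.pos N)⟩ := by
  rw [Matrix.mul_apply,
    Finset.sum_eq_single_of_mem ⟨((k : ℕ) + 1) % N, Nat.mod_lt _ (NeZero.pos N)⟩ (Finset.mem_univ _)]
  · simp [shiftMatrix]
  · intro j _ hj
    simp only [shiftMatrix, of_apply, mul_ite, mul_one, mul_zero, ite_eq_right_iff]
    exact fun h => absurd (Fin.ext h) hj

theorem exists_unitary_mul_eq_mul_clockMatrix_shiftMatrix {N : ℕ} [NeZero N]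
    {U W : Matrix (Fin N) (Fin N) ℂ} {v : Fin N → ℂ} {a : ℂ}
    (hU : U ∈ unitaryGroup (Fin N) ℂ) (hW : W ∈ unitaryGroup (Fin N) ℂ)
    (hUW : U * W = Complex.exp (2 * Real.pi * Complex.I / N) • (W * U))
    (hv : star v ⬝ᵥ v = 1) (hUv : U *ᵥ v = a • v) (hWv : W ^ N *ᵥ v = v) :
    ∃ S ∈ unitaryGroup (Fin N) ℂ,
      U * S = S * (a • clockMatrix N) ∧ W * S = S * shiftMatrix N := by
  set ω := Complex.exp (2 * Real.pi * Complex.I / N)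
  have hω : IsPrimitiveRoot ω N := Complex.isPrimitiveRoot_exp N (NeZero.ne N)
  set u : ℕ → Fin N → ℂ := fun k => W ^ k *ᵥ v
  have hUu (k : ℕ) : U *ᵥ u k = (a * ω ^ k) • u k := by
    rw [mulVec_mulVec, mul_pow_eq_smul_pow_mul hUW, smul_mulVec, ← mulVec_mulVec, hUv,
      mulVec_smul, smul_smul, mul_comm]
  have hu_periodic : Function.Periodic u N := fun k => by
    simp only [u, pow_add, ← mulVec_mulVec, hWv]
  have ha : a ≠ 0 := right_ne_zero_of_mul_eq_one (Unitary.star_mul_self_of_mem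
    (mem_unitary_of_mulVec_eq_smul hU hUv (by rintro rfl; simp at hv)))
  have hu_orthonormal (j k : Fin N) : star (u j) ⬝ᵥ u k = if j = k then 1 else 0 := by
    split_ifs with hjk
    · rw [hjk, star_mulVec_dotProduct_mulVec (pow_mem hW k), hv]
    · refine dotProduct_eq_zero_of_mulVec_eq_smul hU (hUu j) (hUu k) ?_
      rw [Ne, mul_right_inj' ha]
      exact fun h => hjk (Fin.ext (hω.pow_inj j.2 k.2 h))
  refine ⟨(of fun k : Fin N => u k)ᵀ, transpose_of_mem_unitaryGroup hu_orthonormal, ?_, ?_⟩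
  · ext i k
    rw [mul_transpose_of_apply, hUu, Matrix.mul_smul, Matrix.smul_apply,
      clockMatrix_eq_diagonal_pow, mul_diagonal]
    simp only [Pi.smul_apply, transpose_apply, of_apply, smul_eq_mul]
    ring
  · ext i k
    rw [mul_transpose_of_apply, mul_shiftMatrix_apply]
    simp only [transpose_apply, of_apply, hu_periodic.map_mod_nat, u, mulVec_mulVec, ← pow_succ']

/-- Uniqueness of the irreducible twist eater pair: any unitary pair `(U, V)` with
`U V = exp(2πi/N) V U` equals the clock–shift pair `(Q_N, P_N)` up to a common
unitary change of basis and multiplication by phases. -/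
theorem twist_eater_pair_unique
    (N : ℕ) (hN : 1 ≤ N)
    (U V : Matrix (Fin N) (Fin N) ℂ)
    (hU : U ∈ Matrix.unitaryGroup (Fin N) ℂ)
    (hV : V ∈ Matrix.unitaryGroup (Fin N) ℂ)
    (hcomm : U * V = Complex.exp (2 * Real.pi * Complex.I / N) • (V * U)) :
    ∃ S ∈ Matrix.unitaryGroup (Fin N) ℂ, ∃ c₁ c₂ : ℂ,
      ‖c₁‖ = 1 ∧ ‖c₂‖ = 1 ∧
      U = c₁ • (S * clockMatrix N * S⁻¹) ∧
      V = c₂ • (S * shiftMatrix N * S⁻¹) := by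
  have : NeZero N := ⟨by omega⟩
  have : Nonempty (Fin N) := ⟨⟨0, hN⟩⟩
  have hUVN : Commute U (V ^ N) := by
    rw [commute_iff_eq, mul_pow_eq_smul_pow_mul hcomm N,
      (Complex.isPrimitiveRoot_exp N (NeZero.ne N)).pow_eq_one, one_smul]
  obtain ⟨v, hv, a, μ, hUv, hVv⟩ := exists_unit_common_eigenvector hUVN
  have hv0 : v ≠ 0 := by rintro rfl; simp at hv
  obtain ⟨c, hc, hcμ⟩ := Complex.exists_pow_eq_of_mem_unitary
    (mem_unitary_of_mulVec_eq_smul (pow_mem hV N) hVv hv0) (NeZero.ne N)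
  obtain ⟨S, hS, hUS, hWS⟩ := exists_unitary_mul_eq_mul_clockMatrix_shiftMatrix (W := star c • V)
    hU (Unitary.smul_mem_of_mem (Unitary.star_mem hc) hV)
    (by rw [mul_smul_comm, hcomm, smul_mul_assoc, smul_comm]) hv hUv
    (by rw [smul_pow, smul_mulVec, hVv, smul_smul, ← star_pow, hcμ,
      Unitary.star_mul_self_of_mem (hcμ ▸ pow_mem hc N), one_smul])
  refine ⟨S, hS, a, c, Complex.mem_unitary_iff_norm_eq_one.mp
    (mem_unitary_of_mulVec_eq_smul hU hUv hv0), Complex.mem_unitary_iff_norm_eq_one.mp hc, ?_, ?_⟩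
  · rw [eq_mul_mul_inv_of_mul_eq_mul hS hUS, Matrix.mul_smul, Matrix.smul_mul]
  · rw [← eq_mul_mul_inv_of_mul_eq_mul hS hWS, smul_smul, Unitary.mul_star_self_of_mem hc,
      one_smul]
end

section
/- For every integer N ≥ 1 and every vector of integers (m₁, m₂, m₃), there exist N×N unitary matrices Γ_1, Γ_2, Γ_3 with det Γ_i = 1 satisfying Γ_i Γ_j = exp(2πi·ε_{ijk}m_k/N)·Γ_j Γ_i for all i, j ∈ {1,2,3}, where ε_{ijk} is the totally antisymmetric symbol with ε_{123} = 1. (In three dimensions, twist-eating solutions exist for every twist.) -/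
open Complex

/-- The totally antisymmetric Levi-Civita symbol `ε_{ijk}` on three indices,
with `ε_{123} = 1` (indices here running over `Fin 3`). -/
def eps3 (i j k : Fin 3) : ℤ :=
  (((j : ℤ) - (i : ℤ)) * ((k : ℤ) - (i : ℤ)) * ((k : ℤ) - (j : ℤ))) / 2

/-!
The twist eaters are generalized clock-and-shift matrices `W(a, b) = shift^a · clock^b` on
`ℂ^(ZMod N)`, which satisfy `W(a, b) W(c, d) = ω^(bc - ad) W(c, d) W(a, b)` with `ω = e^(2πi/N)`.
Every integer vector is a cross product `m = u × v` of integer vectors (by Bézout), and then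
`Γ_i = W(v_i, u_i)` has commutator phases `ω^(u_i v_j - u_j v_i) = ω^(ε_{ijk} m_k)`.
Rescaling each `Γ_i` by an `N`-th root of `(det Γ_i)⁻¹` puts it in `SU(N)` without changing
the phases.
-/

open Matrix

section Weyl

variable {R : Type*} [CommRing R] [Fintype R] [DecidableEq R] (ψ : AddChar R ℂ)

noncomputable def weylMatrix (a b : R) : Matrix R R ℂ :=
  of fun x y => if x = y + a then ψ (b * y) else 0

theorem weylMatrix_mul (a b c d : R) :
    weylMatrix ψ a b * weylMatrix ψ c d = ψ (b * c) • weylMatrix ψ (a + c) (b + d) := by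
  ext x y
  simp only [weylMatrix, mul_apply, of_apply, Matrix.smul_apply, smul_eq_mul, mul_ite, mul_zero,
    ite_mul, zero_mul, Finset.sum_ite_eq', Finset.mem_univ, if_true, ← AddChar.map_add_eq_mul]
  rw [← add_assoc, add_right_comm y]
  congr 2
  ring

omit [Fintype R] in
theorem weylMatrix_zero_zero : weylMatrix ψ 0 0 = 1 := by
  ext x y
  simp [weylMatrix, one_apply]

theorem conjTranspose_weylMatrix (a b : R) :
    (weylMatrix ψ a b)ᴴ = ψ (a * b) • weylMatrix ψ (-a) (-b) := by
  ext x y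
  simp only [weylMatrix, conjTranspose_apply, of_apply, Matrix.smul_apply, smul_eq_mul, mul_ite,
    mul_zero, ← AddChar.map_add_eq_mul]
  by_cases h : y = x + a
  · rw [if_pos h, if_pos (by rw [h]; ring), ← starRingEnd_apply, ← AddChar.map_neg_eq_conj, h]
    congr 1
    ring
  · rw [if_neg h, if_neg (by rintro rfl; exact h (by ring)), star_zero]

theorem weylMatrix_mem_unitaryGroup (a b : R) : weylMatrix ψ a b ∈ unitaryGroup R ℂ := by
  rw [mem_unitaryGroup_iff', star_eq_conjTranspose, conjTranspose_weylMatrix, smul_mul,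
    weylMatrix_mul, smul_smul, ← AddChar.map_add_eq_mul]
  simp [mul_comm b a, weylMatrix_zero_zero]

theorem weylMatrix_mul_comm (a b c d : R) :
    weylMatrix ψ a b * weylMatrix ψ c d =
      ψ (b * c - a * d) • (weylMatrix ψ c d * weylMatrix ψ a b) := by
  rw [weylMatrix_mul, weylMatrix_mul, smul_smul, ← AddChar.map_add_eq_mul, add_comm c, add_comm d]
  ring_nf

end Weyl

section

variable {n : Type*} [Fintype n] [DecidableEq n]

theorem smul_mem_unitaryGroup {c : ℂ} (hc : star c * c = 1) {U : Matrix n n ℂ}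
    (hU : U ∈ unitaryGroup n ℂ) : c • U ∈ unitaryGroup n ℂ := by
  rw [mem_unitaryGroup_iff', star_smul, smul_mul_smul_comm, hc, mem_unitaryGroup_iff'.mp hU,
    one_smul]

theorem exists_smul_mem_specialUnitaryGroup [Nonempty n] {U : Matrix n n ℂ}
    (hU : U ∈ unitaryGroup n ℂ) : ∃ c : ℂ, c • U ∈ specialUnitaryGroup n ℂ := by
  have hcard : Fintype.card n ≠ 0 := Fintype.card_ne_zero
  obtain ⟨c, hc⟩ := IsAlgClosed.exists_pow_nat_eq (star U.det) (Nat.pos_of_ne_zero hcard)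
  have hc_norm : ‖c‖ = 1 := by
    have h : ‖c‖ ^ Fintype.card n = 1 := by
      rw [← norm_pow, hc, norm_star]
      exact CStarRing.norm_of_mem_unitary (det_of_mem_unitary hU)
    exact (pow_eq_one_iff_of_nonneg (norm_nonneg c) hcard).mp h
  have hc_unit : star c * c = 1 := by
    rw [← starRingEnd_apply, Complex.conj_mul', hc_norm]
    norm_num
  refine ⟨c, mem_specialUnitaryGroup_iff.mpr ⟨smul_mem_unitaryGroup hc_unit hU, ?_⟩⟩
  rw [det_smul, hc]
  exact Unitary.star_mul_self_of_mem (det_of_mem_unitary hU)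

theorem reindex_mem_unitaryGroup {m : Type*} [Fintype m] [DecidableEq m] (e : m ≃ n)
    {U : Matrix m m ℂ} (hU : U ∈ unitaryGroup m ℂ) : reindex e e U ∈ unitaryGroup n ℂ := by
  rw [mem_unitaryGroup_iff', star_eq_conjTranspose, conjTranspose_reindex,
    ← coe_reindexAlgEquiv ℂ ℂ, ← map_mul, ← star_eq_conjTranspose, mem_unitaryGroup_iff'.mp hU,
    map_one]

end

theorem sum_eps3_mul_cross (u v : Fin 3 → ℤ) (i j : Fin 3) :
    ∑ k, eps3 i j k * (u ⨯₃ v) k = u i * v j - u j * v i := by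
  fin_cases i <;> fin_cases j <;> simp [eps3, cross_apply, Fin.sum_univ_three]

theorem exists_cross_eq (m : Fin 3 → ℤ) : ∃ u v : Fin 3 → ℤ, u ⨯₃ v = m := by
  rcases eq_or_ne (Int.gcd (m 0) (m 1)) 0 with hg | hg
  · obtain ⟨h0, h1⟩ := Int.gcd_eq_zero_iff.mp hg
    refine ⟨![1, 0, 0], ![0, m 2, 0], ?_⟩
    ext i
    fin_cases i <;> simp [cross_apply, h0, h1]
  · obtain ⟨g, r, s, -, hrs, hr, hs⟩ := Int.exists_gcd_one' (Nat.pos_of_ne_zero hg)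
    obtain ⟨x, y, hxy⟩ := Int.isCoprime_iff_gcd_eq_one.mpr hrs
    -- `u = (-m₁, m₀, 0) / g`; Bézout `x r + y s = 1` adjusts the third component of `u × v`.
    refine ⟨![-s, r, 0], ![-(x * m 2), -(y * m 2), g], ?_⟩
    ext i
    fin_cases i <;> simp [cross_apply]
    · exact hr.symm
    · exact hs.symm
    · linear_combination m 2 * hxy

/-- In three dimensions, twist-eating solutions exist for every twist: for every
`N ≥ 1` and every integer vector `m⃗` there are `SU(N)` matrices `Γ_i` with
`Γ_i Γ_j = exp(2πi ε_{ijk} m_k / N) Γ_j Γ_i`. -/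
theorem three_dim_twist_eaters_exist (N : ℕ) (hN : 1 ≤ N) (m : Fin 3 → ℤ) :
    ∃ Γ : Fin 3 → Matrix (Fin N) (Fin N) ℂ,
      (∀ i, Γ i ∈ Matrix.unitaryGroup (Fin N) ℂ) ∧
      (∀ i, (Γ i).det = 1) ∧
      (∀ i j, Γ i * Γ j =
        Complex.exp (2 * Real.pi * Complex.I * ((∑ k, eps3 i j k * m k : ℤ) : ℂ) / N) •
          (Γ j * Γ i)) := by
  have : NeZero N := ⟨by omega⟩
  obtain ⟨u, v, rfl⟩ := exists_cross_eq m
  let e : ZMod N ≃ Fin N := (ZMod.finEquiv N).symm.toEquiv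
  let W i := reindexAlgEquiv ℂ ℂ e (weylMatrix ZMod.stdAddChar (v i) (u i))
  have hW_comm : ∀ i j, W i * W j =
      Complex.exp (2 * Real.pi * Complex.I * ((∑ k, eps3 i j k * (u ⨯₃ v) k : ℤ) : ℂ) / N) •
        (W j * W i) := by
    intro i j
    rw [sum_eps3_mul_cross, ← ZMod.stdAddChar_coe, ← map_mul, ← map_mul, weylMatrix_mul_comm,
      map_smul]
    push_cast
    ring_nf
  choose c hc_SU using fun i => exists_smul_mem_specialUnitaryGroup
    (reindex_mem_unitaryGroup e (weylMatrix_mem_unitaryGroup ZMod.stdAddChar (v i) (u i)))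
  refine ⟨fun i => c i • W i, fun i => (mem_specialUnitaryGroup_iff.mp (hc_SU i)).1,
    fun i => (mem_specialUnitaryGroup_iff.mp (hc_SU i)).2, fun i j => ?_⟩
  rw [smul_mul_smul_comm, smul_mul_smul_comm, mul_comm (c j), hW_comm, smul_comm]
end

section
/- Let N ≥ 3 be an integer. For all integers k₁, k₂, k₃, m₁, m₂, m₃ and every integer n, there exist functions ε₁, ε₂, ε₃, β₁, β₂, β₃ : Fin N → ℤ such that Σ_a ε_i(a) = −k_i and Σ_a β_i(a) = −m_i for each i ∈ {1,2,3}, and Σ_{i=1}^{3} Σ_a ε_i(a)·β_i(a) = n. (Hence for SU(N) with N ≥ 3, the integer part of the topological charge Q = −κ(n_{μν})/N + Tr(ε⃗·β⃗) can be made equal to any prescribed integer by a suitable choice of the integer diagonal matrices Q_{μν}.) -/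
/-!
On a single index `i` put `εᵢ = e_a + (s - 1) e_b` and `βᵢ = n e_a + (t - n) e_c` for three distinct
diagonal positions `a, b, c`: the prescribed traces are met and, since `b` lies outside the support
of `βᵢ`, the only surviving product is `εᵢ(a) βᵢ(a) = n`. Realising the charge `n` on the first
index and `0` on the other two gives the theorem.
-/

open Matrix

theorem exists_sum_eq_sum_eq_dotProduct_eq {R ι : Type*} [Ring R] [Fintype ι] [DecidableEq ι]
    {a b c : ι} (hab : a ≠ b) (hac : a ≠ c) (hbc : b ≠ c) (s t n : R) :
    ∃ ε β : ι → R, ∑ i, ε i = s ∧ ∑ i, β i = t ∧ ε ⬝ᵥ β = n := by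
  refine ⟨Pi.single a 1 + Pi.single b (s - 1), Pi.single a n + Pi.single c (t - n), ?_, ?_, ?_⟩
  · simp [Finset.sum_add_distrib]
  · simp [Finset.sum_add_distrib]
  · simp [hab.symm, hac.symm, hbc]

/-- For `SU(N)` with `N ≥ 3`, the integer part of the topological charge can be
made equal to any prescribed integer: for all integers `k_i`, `m_i` and every
integer `n`, there are integer diagonal entries `ε_i`, `β_i : Fin N → ℤ` with
`∑ ε_i = -k_i`, `∑ β_i = -m_i` and `∑_i ∑_a ε_i(a) β_i(a) = n`. -/
theorem integer_part_of_charge_arbitrary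
    (N : ℕ) (hN : 3 ≤ N)
    (k m : Fin 3 → ℤ) (n : ℤ) :
    ∃ ε β : Fin 3 → Fin N → ℤ,
      (∀ i, (∑ a, ε i a) = -(k i)) ∧
      (∀ i, (∑ a, β i a) = -(m i)) ∧
      (∑ i, ∑ a, ε i a * β i a) = n := by
  have hinj := Fin.castLE_injective hN
  have h i := exists_sum_eq_sum_eq_dotProduct_eq (hinj.ne (by decide : (0 : Fin 3) ≠ 1))
    (hinj.ne (by decide : (0 : Fin 3) ≠ 2)) (hinj.ne (by decide : (1 : Fin 3) ≠ 2))
    (-k i) (-m i) (Pi.single (M := fun _ => ℤ) 0 n i)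
  choose ε β hε hβ hεβ using h
  refine ⟨ε, β, hε, hβ, ?_⟩
  change ∑ i, ε i ⬝ᵥ β i = n
  simp [hεβ]
end
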